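/- arXiv:1409.5691 — 6 statements merged into one kernel-verified Lean document; each statement's English description precedes it below -/
import Mathlib

section
/- For every nonzero vector v in (Fin 6 → ZMod 2) with Q v = 1, there are exactly 6 external lines through v; that is, exactly 6 three-element subsets s of (Fin 6 → ZMod 2) with v ∈ s, whose elements sum to 0, and all of whose elements are nonzero with Q-value 1. -/
/-!
Over a field of characteristic 2 the line through `v` and `a` is `{v, a, v + a}`, so an
external line through `v` is the same thing as an unordered pair `{a, v + a}` of points off
the quadric (the degenerate choices `a = 0` and `a = v` are excluded because `Q 0 = 0`).
Every external line through `v` arises from exactly its two points other than `v`, so there are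
half as many lines as such points `a`, and a direct enumeration finds 12 of them.
-/

/-- The hyperbolic quadratic form on GF(2)^6. -/
def Q (v : Fin 6 → ZMod 2) : ZMod 2 := v 0 * v 1 + v 2 * v 3 + v 4 * v 5

open Finset

section ElementaryAbelianTwoGroup

variable {G : Type*} [AddCommGroup G]

lemma add_add_cancel_left_of_add_self (hG : ∀ x : G, x + x = 0) (v a : G) :
    v + (v + a) = a := by
  rw [← add_assoc, hG, zero_add]

variable [DecidableEq G]

lemma card_triple_eq_three {v a : G} (hv : v ≠ 0) (ha : a ≠ 0) (hav : a ≠ v) :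
    #{v, a, v + a} = 3 := by
  have hva : v + a ≠ v := fun h => ha (by simpa using h)
  have hvaa : v + a ≠ a := fun h => hv (by simpa using h)
  rw [card_insert_of_notMem (by simp [hav.symm, hva.symm]), card_pair hvaa.symm]

lemma sum_triple_eq_zero (hG : ∀ x : G, x + x = 0) {v a : G} (hv : v ≠ 0) (ha : a ≠ 0)
    (hav : a ≠ v) : ∑ w ∈ {v, a, v + a}, w = 0 := by
  have hva : v + a ≠ v := fun h => ha (by simpa using h)
  have hvaa : v + a ≠ a := fun h => hv (by simpa using h)
  rw [sum_insert (by simp [hav.symm, hva.symm]), sum_pair hvaa.symm, ← add_assoc, hG]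

lemma eq_triple_of_sum_eq_zero (hG : ∀ x : G, x + x = 0) {v a : G} {L : Finset G}
    (hvL : v ∈ L) (haL : a ∈ L) (hav : a ≠ v) (hL : #L = 3) (hsum : ∑ w ∈ L, w = 0) :
    L = {v, a, v + a} := by
  have haL' : a ∈ L.erase v := mem_erase.2 ⟨hav, haL⟩
  obtain ⟨b, hb⟩ : ∃ b, (L.erase v).erase a = {b} := by
    rw [← card_eq_one, card_erase_of_mem haL', card_erase_of_mem hvL, hL]
  rw [← add_sum_erase L (fun w => w) hvL, ← add_sum_erase _ (fun w => w) haL', hb,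
    sum_singleton, ← add_assoc] at hsum
  have hb' : b = v + a := calc
    b = v + a + (v + a + b) := (add_add_cancel_left_of_add_self hG _ _).symm
    _ = v + a := by rw [hsum, add_zero]
  rw [← insert_erase hvL, ← insert_erase haL', hb, hb']

variable [Fintype G]

lemma filter_triple_eq_eq_erase (hG : ∀ x : G, x + x = 0) {P : G → Prop} [DecidablePred P]
    (hP0 : ¬ P 0) {v : G} {L : Finset G} (hvL : v ∈ L) (hL : #L = 3) (hsum : ∑ w ∈ L, w = 0)
    (hPL : ∀ w ∈ L, P w) :
    ({a | P a ∧ P (v + a)} : Finset G).filter (fun a => {v, a, v + a} = L) = L.erase v := by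
  ext a
  simp only [mem_filter, mem_univ, true_and, mem_erase]
  constructor
  · rintro ⟨⟨-, hPva⟩, rfl⟩
    exact ⟨fun h => hP0 (hG v ▸ h ▸ hPva), by simp⟩
  · rintro ⟨hav, haL⟩
    have hL := eq_triple_of_sum_eq_zero hG hvL haL hav hL hsum
    exact ⟨⟨hPL a haL, hPL _ (by simp [hL])⟩, hL.symm⟩

theorem card_filter_add_eq_two_mul_card_lines (hG : ∀ x : G, x + x = 0) (P : G → Prop)
    [DecidablePred P] (hP0 : ¬ P 0) {v : G} (hPv : P v) :
    #{a | P a ∧ P (v + a)} =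
      2 * #{L : Finset G | v ∈ L ∧ #L = 3 ∧ ∑ w ∈ L, w = 0 ∧ ∀ w ∈ L, P w} := by
  have hne : ∀ {w}, P w → w ≠ 0 := fun hw h => hP0 (h ▸ hw)
  have hmaps : Set.MapsTo (fun a => {v, a, v + a}) {a | P a ∧ P (v + a)}
      {L : Finset G | v ∈ L ∧ #L = 3 ∧ ∑ w ∈ L, w = 0 ∧ ∀ w ∈ L, P w} := by
    rintro a ⟨hPa, hPva⟩
    have hav : a ≠ v := fun h => hne hPva (h ▸ hG v)
    refine ⟨by simp, card_triple_eq_three (hne hPv) (hne hPa) hav,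
      sum_triple_eq_zero hG (hne hPv) (hne hPa) hav, ?_⟩
    simpa using ⟨hPv, hPa, hPva⟩
  rw [← coe_filter_univ, ← coe_filter_univ] at hmaps
  rw [card_eq_sum_card_fiberwise hmaps, sum_const_nat, mul_comm]
  intro L hL
  obtain ⟨hvL, hcard, hsum, hPL⟩ := (mem_filter_univ _).1 hL
  rw [filter_triple_eq_eq_erase hG hP0 hvL hcard hsum hPL, card_erase_of_mem hvL, hcard]

end ElementaryAbelianTwoGroup

lemma card_filter_Q_eq_one_and_Q_add_eq_one (v : Fin 6 → ZMod 2) (hQ : Q v = 1) :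
    #{a | (a ≠ 0 ∧ Q a = 1) ∧ v + a ≠ 0 ∧ Q (v + a) = 1} = 12 := by
  revert v
  decide

/-- Every point off the hyperbolic quadric Q⁺(5,2) lies on exactly 6 external lines. -/
theorem external_lines_through_point (v : Fin 6 → ZMod 2) (hv : v ≠ 0) (hQ : Q v = 1) :
    (Finset.univ.filter (fun L : Finset (Fin 6 → ZMod 2) =>
      v ∈ L ∧ L.card = 3 ∧ (∑ w ∈ L, w) = 0 ∧ ∀ w ∈ L, w ≠ 0 ∧ Q w = 1)).card = 6 := by
  have h := card_filter_add_eq_two_mul_card_lines CharTwo.add_self_eq_zero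
    (fun w => w ≠ 0 ∧ Q w = 1) (fun h0 => h0.1 rfl) ⟨hv, hQ⟩
  rw [card_filter_Q_eq_one_and_Q_add_eq_one v hQ] at h
  omega
end

section
/- A family F of seven 2-element subsets of Fin 8 has the property that any two distinct members of F intersect if and only if there exists i : Fin 8 such that F equals the set of all 2-element subsets of Fin 8 containing i. -/
/-!
A pairwise intersecting family of 2-sets either has a point common to all its members or is
contained in a triangle `{ab, bc, ac}`: if `ab` is a member and neither `a` nor `b` is common,
some member avoids `a`, hence is `bc`, and some member avoids `b`, hence meets `bc` in `c` and is
`ac`; every member meets all three sides, so it contains two of `a, b, c`. Seven members therefore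
share a point `i`, and they exhaust the star of `i`, which has `8 - 1 = 7` members.
-/

open Finset

variable {α : Type*} [DecidableEq α]

lemma Finset.eq_pair_of_card_eq_two {s : Finset α} {x y : α} (hs : #s = 2) (hx : x ∈ s)
    (hy : y ∈ s) (hxy : x ≠ y) : s = {x, y} :=
  (eq_of_subset_of_card_le (insert_subset hx (singleton_subset_iff.2 hy))
    (by rw [hs, card_pair hxy])).symm

lemma Finset.mem_of_pair_inter_nonempty {a b : α} {t : Finset α} (h : ({a, b} ∩ t).Nonempty)
    (ha : a ∉ t) : b ∈ t := by
  obtain ⟨x, hx⟩ := h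
  grind

lemma Finset.exists_eq_pair_of_card_eq_two {s : Finset α} {x : α} (hs : #s = 2) (hx : x ∈ s) :
    ∃ y, y ≠ x ∧ s = {x, y} := by
  obtain ⟨a, b, hab, rfl⟩ := card_eq_two.1 hs
  grind [pair_comm]

lemma Finset.pair_right_injective (i : α) :
    Function.Injective fun j : α => ({i, j} : Finset α) := by
  intro j k h
  have hj : j ∈ ({i, k} : Finset α) := by simp only at h; simp [← h]
  have hk : k ∈ ({i, j} : Finset α) := by simp only at h; simp [h]
  simp only [mem_insert, mem_singleton] at hj hk
  grind

lemma card_filter_card_eq_two_mem [Fintype α] (i : α) :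
    #(univ.filter fun s : Finset α => #s = 2 ∧ i ∈ s) = Fintype.card α - 1 := by
  have : (univ.filter fun s : Finset α => #s = 2 ∧ i ∈ s) =
      ({i}ᶜ : Finset α).image ({i, ·}) := by
    ext s
    simp only [mem_filter, mem_univ, true_and, mem_image, mem_compl, mem_singleton]
    constructor
    · rintro ⟨hs, hi⟩
      obtain ⟨j, hji, rfl⟩ := exists_eq_pair_of_card_eq_two hs hi
      exact ⟨j, hji, rfl⟩
    · rintro ⟨j, hji, rfl⟩
      exact ⟨card_pair (Ne.symm hji), mem_insert_self i {j}⟩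
  rw [this, card_image_of_injective _ (pair_right_injective i), card_compl, card_singleton]

section Intersecting

variable {F : Finset (Finset α)}

lemma mem_of_pair_mem_of_notMem (hF : ∀ s ∈ F, ∀ t ∈ F, s ≠ t → (s ∩ t).Nonempty)
    {a b : α} {t : Finset α} (hab : {a, b} ∈ F) (ht : t ∈ F) (ha : a ∉ t) : b ∈ t :=
  mem_of_pair_inter_nonempty (hF _ hab t ht (by rintro rfl; exact ha (mem_insert_self a {b}))) ha

lemma subset_triangle (h2 : ∀ s ∈ F, #s = 2)
    (hF : ∀ s ∈ F, ∀ t ∈ F, s ≠ t → (s ∩ t).Nonempty) {a b c : α}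
    (hab : a ≠ b) (hbc : b ≠ c) (hac : a ≠ c)
    (hs : {a, b} ∈ F) (ht : {b, c} ∈ F) (hu : {a, c} ∈ F) :
    F ⊆ {{a, b}, {b, c}, {a, c}} := by
  intro v hv
  simp only [mem_insert, mem_singleton]
  by_cases ha : a ∈ v
  · by_cases hb : b ∈ v
    · exact .inl (eq_pair_of_card_eq_two (h2 v hv) ha hb hab)
    · have hc := mem_of_pair_mem_of_notMem hF ht hv hb
      exact .inr (.inr (eq_pair_of_card_eq_two (h2 v hv) ha hc hac))
  · have hb := mem_of_pair_mem_of_notMem hF hs hv ha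
    have hc := mem_of_pair_mem_of_notMem hF hu hv ha
    exact .inr (.inl (eq_pair_of_card_eq_two (h2 v hv) hb hc hbc))

lemma exists_forall_mem_or_card_le_three (h2 : ∀ s ∈ F, #s = 2)
    (hF : ∀ s ∈ F, ∀ t ∈ F, s ≠ t → (s ∩ t).Nonempty) :
    (∃ i, ∀ s ∈ F, i ∈ s) ∨ #F ≤ 3 := by
  rcases F.eq_empty_or_nonempty with rfl | ⟨s, hs⟩
  · exact .inr (by simp)
  obtain ⟨a, b, hab, rfl⟩ := card_eq_two.1 (h2 s hs)
  by_cases ha : ∀ t ∈ F, a ∈ t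
  · exact .inl ⟨a, ha⟩
  by_cases hb : ∀ t ∈ F, b ∈ t
  · exact .inl ⟨b, hb⟩
  push Not at ha hb
  obtain ⟨t, ht, hat⟩ := ha
  obtain ⟨u, hu, hbu⟩ := hb
  obtain ⟨c, hcb, rfl⟩ :=
    exists_eq_pair_of_card_eq_two (h2 t ht) (mem_of_pair_mem_of_notMem hF hs ht hat)
  have hac : a ≠ c := by rintro rfl; simp at hat
  have hcu : c ∈ u := mem_of_pair_mem_of_notMem hF ht hu hbu
  have hau : a ∈ u := mem_of_pair_mem_of_notMem hF (pair_comm a b ▸ hs) hu hbu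
  rw [eq_pair_of_card_eq_two (h2 u hu) hau hcu hac] at hu
  exact .inr ((card_le_card (subset_triangle h2 hF hab hcb.symm hac hs ht hu)).trans card_le_three)

end Intersecting

/-- A family of seven 2-element subsets of `Fin 8` is pairwise intersecting if and only
if it is a "star": the set of all 2-element subsets containing some fixed mark `i`. -/
theorem heptad_pairwise_intersecting_iff_star (F : Finset (Finset (Fin 8)))
    (hcard : F.card = 7) (h2 : ∀ s ∈ F, s.card = 2) :
    (∀ s ∈ F, ∀ t ∈ F, s ≠ t → (s ∩ t).Nonempty) ↔
      ∃ i : Fin 8, F = Finset.univ.filter (fun s : Finset (Fin 8) => s.card = 2 ∧ i ∈ s) := by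
  constructor
  · intro hF
    obtain ⟨i, hi⟩ := (exists_forall_mem_or_card_le_three h2 hF).resolve_right (by omega)
    have hstar : F ⊆ univ.filter fun s => #s = 2 ∧ i ∈ s :=
      fun s hs => mem_filter.2 ⟨mem_univ s, h2 s hs, hi s hs⟩
    refine ⟨i, eq_of_subset_of_card_le hstar ?_⟩
    rw [card_filter_card_eq_two_mem, hcard, Fintype.card_fin]
  · rintro ⟨i, rfl⟩ s hs t ht -
    exact ⟨i, mem_inter.2 ⟨(mem_filter.1 hs).2.2, (mem_filter.1 ht).2.2⟩⟩
end

section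
/- There are exactly 8 Conwell heptads; that is, exactly 8 sets H of seven nonzero vectors v of (Fin 6 → ZMod 2) with Q v = 1 such that Q(a + b) = 1 for all distinct a, b ∈ H. -/
/-- A Conwell heptad: a set of seven off-quadric points such that the line joining any
two of them is external to the quadric. -/
def IsConwellHeptad (H : Finset (Fin 6 → ZMod 2)) : Prop :=
  H.card = 7 ∧ (∀ v ∈ H, v ≠ 0 ∧ Q v = 1) ∧
    ∀ a ∈ H, ∀ b ∈ H, a ≠ b → Q (a + b) = 1

instance : DecidablePred IsConwellHeptad := fun H => by
  unfold IsConwellHeptad; infer_instance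

/-!
The 28 points off the quadric are the duads of an 8-set: for suitable vectors `f₀, …, f₇`
(`frame` below) every such point is `fᵢ + fⱼ` with `i ≠ j`, and two of them are joined by an
external line only if their duads meet. Three pairwise joined off-quadric points `a, b, c` satisfy
`Q (a + b + c) = 0` by polarization, so a heptad never contains a triangle
`{fᵢ + fⱼ, fᵢ + fₖ, fⱼ + fₖ}`. Hence the seven duads of a heptad all pass through one index `i`,
and the heptads are exactly the eight stars `{fᵢ + fⱼ | j ≠ i}`.
-/

open Finset

local notation "V" => Fin 6 → ZMod 2

theorem ne_zero_of_Q_eq_one {v : V} (hv : Q v = 1) : v ≠ 0 := by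
  rintro rfl
  exact zero_ne_one hv

theorem Q_add_add (x y z : V) :
    Q (x + y + z) = Q (x + y) + Q (x + z) + Q (y + z) - Q x - Q y - Q z := by
  simp only [Q, Pi.add_apply]
  ring

theorem Q_add_add_eq_zero {x y z : V} (hx : Q x = 1) (hy : Q y = 1) (hz : Q z = 1)
    (hxy : Q (x + y) = 1) (hxz : Q (x + z) = 1) (hyz : Q (y + z) = 1) : Q (x + y + z) = 0 := by
  rw [Q_add_add, hx, hy, hz, hxy, hxz, hyz]
  decide

namespace IsConwellHeptad

variable {H : Finset V} (hH : IsConwellHeptad H)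
include hH

theorem Q_eq_one {v : V} (hv : v ∈ H) : Q v = 1 := (hH.2.1 v hv).2

theorem add_notMem {a b : V} (ha : a ∈ H) (hb : b ∈ H) (hab : a ≠ b) : a + b ∉ H := by
  intro hsum
  obtain ⟨y, hy, hy'⟩ := exists_mem_notMem_of_card_lt_card
    (s := {a, b, a + b}) (t := H) (by rw [hH.1]; exact card_le_three.trans_lt (by norm_num))
  simp only [mem_insert, mem_singleton, not_or] at hy'
  obtain ⟨hya, hyb, hys⟩ := hy'
  have := Q_add_add_eq_zero (hH.Q_eq_one ha) (hH.Q_eq_one hb) (hH.Q_eq_one hy)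
    (hH.2.2 a ha b hb hab) (hH.2.2 a ha y hy (Ne.symm hya)) (hH.2.2 b hb y hy (Ne.symm hyb))
  rw [hH.2.2 _ hsum y hy (Ne.symm hys)] at this
  exact one_ne_zero this

end IsConwellHeptad

/-- Any eight vectors whose pairwise sums are off the quadric and whose sums of four are on it
would do; this choice is invariant under cycling the three hyperbolic pairs. -/
def frame : Fin 8 → V :=
  ![0, ![0, 0, 1, 1, 0, 1], ![0, 0, 1, 1, 1, 0], ![0, 1, 0, 0, 1, 1], ![1, 0, 0, 0, 1, 1],
    ![1, 1, 0, 1, 0, 0], ![1, 1, 1, 0, 0, 0], ![1, 1, 1, 1, 1, 1]]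

theorem frame_injective : Function.Injective frame := by decide

def duadPoint (i j : Fin 8) : V := frame i + frame j

theorem duadPoint_comm (i j : Fin 8) : duadPoint i j = duadPoint j i := add_comm _ _

theorem duadPoint_add_duadPoint (i j k : Fin 8) :
    duadPoint i j + duadPoint i k = duadPoint j k := by
  simp only [duadPoint, add_add_add_comm, CharTwo.add_self_eq_zero, zero_add]

theorem duadPoint_injective (i : Fin 8) : Function.Injective (duadPoint i) :=
  (add_right_injective (frame i)).comp frame_injective

theorem Q_duadPoint {i j : Fin 8} (h : i ≠ j) : Q (duadPoint i j) = 1 := by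
  revert i j
  decide

theorem exists_eq_duadPoint {v : V} (hv : Q v = 1) : ∃ i j, i ≠ j ∧ v = duadPoint i j := by
  revert v
  decide

theorem meet_of_Q_duadPoint_add_duadPoint {i j m n : Fin 8} (hij : i ≠ j) (hmn : m ≠ n)
    (h : Q (duadPoint i j + duadPoint m n) = 1) : i = m ∨ i = n ∨ j = m ∨ j = n := by
  revert i j m n
  decide

def starHeptad (i : Fin 8) : Finset V := (univ.erase i).image (duadPoint i)

theorem starHeptad_injective : Function.Injective starHeptad := by decide

theorem mem_starHeptad {i : Fin 8} {v : V} :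
    v ∈ starHeptad i ↔ ∃ j, j ≠ i ∧ duadPoint i j = v := by
  simp [starHeptad]

theorem card_starHeptad (i : Fin 8) : #(starHeptad i) = 7 := by
  rw [starHeptad, card_image_of_injective _ (duadPoint_injective i),
    card_erase_of_mem (mem_univ i), card_univ, Fintype.card_fin]

theorem isConwellHeptad_starHeptad (i : Fin 8) : IsConwellHeptad (starHeptad i) := by
  refine ⟨card_starHeptad i, fun v hv => ?_, fun a ha b hb hab => ?_⟩
  · obtain ⟨j, hj, rfl⟩ := mem_starHeptad.1 hv
    exact ⟨ne_zero_of_Q_eq_one (Q_duadPoint hj.symm), Q_duadPoint hj.symm⟩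
  · obtain ⟨j, -, rfl⟩ := mem_starHeptad.1 ha
    obtain ⟨k, -, rfl⟩ := mem_starHeptad.1 hb
    rw [duadPoint_add_duadPoint]
    exact Q_duadPoint fun h => hab (h ▸ rfl)

theorem exists_eq_duadPoint_pair {a b : V} (ha : Q a = 1) (hb : Q b = 1) (hab : Q (a + b) = 1)
    (hne : a ≠ b) :
    ∃ i j k, i ≠ j ∧ i ≠ k ∧ j ≠ k ∧ a = duadPoint i j ∧ b = duadPoint i k := by
  obtain ⟨p, q, hpq, rfl⟩ := exists_eq_duadPoint ha
  obtain ⟨m, n, hmn, rfl⟩ := exists_eq_duadPoint hb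
  rcases meet_of_Q_duadPoint_add_duadPoint hpq hmn hab with rfl | rfl | rfl | rfl
  · exact ⟨p, q, n, hpq, hmn, fun h => hne (h ▸ rfl), rfl, rfl⟩
  · exact ⟨p, q, m, hpq, hmn.symm, fun h => hne (h ▸ duadPoint_comm _ _), rfl, duadPoint_comm _ _⟩
  · exact ⟨q, p, n, hpq.symm, hmn, fun h => hne (h ▸ duadPoint_comm _ _), duadPoint_comm _ _, rfl⟩
  · exact ⟨q, p, m, hpq.symm, hmn.symm, fun h => hne (h ▸ rfl), duadPoint_comm _ _,
      duadPoint_comm _ _⟩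

theorem mem_starHeptad_of_Q_add_eq_one {i j k : Fin 8} {x : V} (hij : i ≠ j) (hik : i ≠ k)
    (hjk : j ≠ k) (hx : Q x = 1) (hjx : Q (duadPoint i j + x) = 1)
    (hkx : Q (duadPoint i k + x) = 1) (hne : x ≠ duadPoint j k) : x ∈ starHeptad i := by
  obtain ⟨m, n, hmn, rfl⟩ := exists_eq_duadPoint hx
  have hj := meet_of_Q_duadPoint_add_duadPoint hij hmn hjx
  have hk := meet_of_Q_duadPoint_add_duadPoint hik hmn hkx
  rw [mem_starHeptad]
  by_cases hm : i = m
  · exact ⟨n, hm ▸ hmn.symm, hm ▸ rfl⟩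
  by_cases hn : i = n
  · exact ⟨m, hn ▸ hmn, hn ▸ duadPoint_comm _ _⟩
  have : j = m ∧ k = n ∨ j = n ∧ k = m := by grind
  rcases this with ⟨rfl, rfl⟩ | ⟨rfl, rfl⟩
  · exact absurd rfl hne
  · exact absurd (duadPoint_comm _ _) hne

theorem IsConwellHeptad.exists_eq_starHeptad {H : Finset V} (hH : IsConwellHeptad H) :
    ∃ i, H = starHeptad i := by
  obtain ⟨a, ha, b, hb, hab⟩ := one_lt_card.1 (by rw [hH.1]; norm_num)
  obtain ⟨i, j, k, hij, hik, hjk, rfl, rfl⟩ :=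
    exists_eq_duadPoint_pair (hH.Q_eq_one ha) (hH.Q_eq_one hb) (hH.2.2 _ ha _ hb hab) hab
  refine ⟨i, eq_of_subset_of_card_le (fun x hx => ?_) (by rw [hH.1, card_starHeptad])⟩
  rcases eq_or_ne x (duadPoint i j) with rfl | hxa
  · exact mem_starHeptad.2 ⟨j, hij.symm, rfl⟩
  rcases eq_or_ne x (duadPoint i k) with rfl | hxb
  · exact mem_starHeptad.2 ⟨k, hik.symm, rfl⟩
  refine mem_starHeptad_of_Q_add_eq_one hij hik hjk (hH.Q_eq_one hx)
    (hH.2.2 _ ha _ hx hxa.symm) (hH.2.2 _ hb _ hx hxb.symm) ?_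
  rintro rfl
  exact hH.add_notMem ha hb hab (by rwa [duadPoint_add_duadPoint])

/-- There are exactly 8 Conwell heptads. -/
theorem conwell_heptads_card :
    (Finset.univ.filter IsConwellHeptad).card = 8 := by
  have himage : univ.filter IsConwellHeptad = univ.image starHeptad := by
    ext H
    simp only [mem_filter, mem_univ, true_and, mem_image]
    refine ⟨fun hH => ?_, ?_⟩
    · obtain ⟨i, rfl⟩ := hH.exists_eq_starHeptad
      exact ⟨i, rfl⟩
    · rintro ⟨i, rfl⟩
      exact isConwellHeptad_starHeptad i
  rw [himage, card_image_of_injective _ starHeptad_injective, card_univ, Fintype.card_fin]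
end

section
/- No three points of a Conwell heptad are collinear: if H is a Conwell heptad of the hyperbolic quadric of PG(5,2) and a, b, c ∈ H are pairwise distinct, then a + b + c ≠ 0. -/
/-!
If `a + b + c = 0` in a heptad, then `c = a + b`. Pick a fourth point `d` of the heptad: the six
values of `Q` on `a, b, d, a + b, b + d, d + a` are all `1`, and the identity
`Q (x + y + z) + (Q x + Q y + Q z) = Q (x + y) + Q (y + z) + Q (z + x)`, valid for every quadratic
map, then forces `Q (c + d) = Q (a + b + d) = 0`, contradicting `Q (c + d) = 1`.
-/

namespace QuadraticMap

variable {R M N : Type*} [CommSemiring R] [AddCommMonoid M] [Module R M]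
  [AddCancelCommMonoid N] [Module R N]

theorem map_add_add_eq_zero_of_forall_eq (Q : QuadraticMap R M N) {x y z : M} {u : N}
    (hx : Q x = u) (hy : Q y = u) (hz : Q z = u)
    (hxy : Q (x + y) = u) (hyz : Q (y + z) = u) (hzx : Q (z + x) = u) :
    Q (x + y + z) = 0 := by
  have h := Q.map_add_add_add_map x y z
  rw [hx, hy, hz, hxy, hyz, hzx] at h
  exact add_eq_right.mp h

end QuadraticMap

theorem Q_eq_proj_add_proj_add_proj :
    Q = ⇑(QuadraticMap.proj 0 1 + QuadraticMap.proj 2 3 + QuadraticMap.proj 4 5 :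
      QuadraticMap (ZMod 2) (Fin 6 → ZMod 2) (ZMod 2)) :=
  rfl

theorem conwell_heptad_no_three_collinear_general (H : Finset (Fin 6 → ZMod 2))
    (hH : IsConwellHeptad H) (a b c : Fin 6 → ZMod 2)
    (ha : a ∈ H) (hb : b ∈ H) (hc : c ∈ H)
    (hab : a ≠ b) :
    a + b + c ≠ 0 := by
  intro habc
  obtain ⟨hcard, hoff, hext⟩ := hH
  obtain ⟨d, hd, hd_notMem⟩ : ∃ d ∈ H, d ∉ ({a, b, c} : Finset _) :=
    Finset.exists_mem_notMem_of_card_lt_card (Finset.card_le_three.trans_lt (by omega))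
  simp only [Finset.mem_insert, Finset.mem_singleton, not_or] at hd_notMem
  obtain ⟨hda, hdb, hdc⟩ := hd_notMem
  have hcd : Q (c + d) = 1 := hext c hc d hd (Ne.symm hdc)
  have hQabd : Q (a + b + d) = 0 := by
    rw [Q_eq_proj_add_proj_add_proj] at hoff hext ⊢
    exact QuadraticMap.map_add_add_eq_zero_of_forall_eq _ (hoff a ha).2 (hoff b hb).2
      (hoff d hd).2 (hext a ha b hb hab) (hext b hb d hd (Ne.symm hdb)) (hext d hd a ha hda)
  rw [← CharTwo.add_eq_zero.mp habc, hQabd] at hcd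
  exact zero_ne_one hcd

/-- No three points of a Conwell heptad are collinear. -/
theorem conwell_heptad_no_three_collinear (H : Finset (Fin 6 → ZMod 2))
    (hH : IsConwellHeptad H) (a b c : Fin 6 → ZMod 2)
    (ha : a ∈ H) (hb : b ∈ H) (hc : c ∈ H)
    (hab : a ≠ b) (hac : a ≠ c) (hbc : b ≠ c) :
    a + b + c ≠ 0 :=
  conwell_heptad_no_three_collinear_general H hH a b c ha hb hc hab
end

section
/- Every external line meets a Conwell heptad in either 0 or exactly 2 points: if H is a Conwell heptad and L is a 3-element set of nonzero vectors of (Fin 6 → ZMod 2), each with Q-value 1, whose sum is 0, then the cardinality of L ∩ H is 0 or 2. -/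
/-! The polar form of `Q` equals `1` on any two distinct points of a heptad `H`, so for distinct
`e, f ∈ H` a point `a ∈ H` has `polar Q a (e + f) = 1` iff `a ∈ {e, f}`. Hence the 21 sums
`e + f` are pairwise distinct and (testing against a fourth point of `H`) lie off `H`; being off
the quadric, together with `H` they exhaust the 28 points with `Q = 1`.

On an external line `{a, b, c}` with `a ∈ H`: if `b ∈ H` then `c = a + b ∉ H`; if `b ∉ H` then
`b = e + f`, and `polar Q a b = Q c - Q a - Q b = 1` forces `a ∈ {e, f}`, so `c = a + b ∈ H`. -/

open Finset QuadraticMap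

local notation "V" => Fin 6 → ZMod 2

lemma polar_eq_one_of_apply_eq_one {M : Type*} [AddCommGroup M] {f : M → ZMod 2} {a b : M}
    (ha : f a = 1) (hb : f b = 1) (hab : f (a + b) = 1) : polar f a b = 1 := by
  rw [polar, ha, hb, hab]; decide

def pairSums {M : Type*} [AddCommMonoid M] [DecidableEq M] (s : Finset M) : Finset M :=
  (s.powersetCard 2).image fun t => ∑ x ∈ t, x

lemma mem_pairSums {M : Type*} [AddCommMonoid M] [DecidableEq M] {s : Finset M} {v : M} :
    v ∈ pairSums s ↔ ∃ e ∈ s, ∃ f ∈ s, e ≠ f ∧ e + f = v := by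
  simp only [pairSums, mem_image, mem_powersetCard, card_eq_two]
  constructor
  · rintro ⟨_, ⟨hs, e, f, hef, rfl⟩, rfl⟩
    exact ⟨e, hs (by simp), f, hs (by simp), hef, by rw [sum_pair hef]⟩
  · rintro ⟨e, he, f, hf, hef, rfl⟩
    exact ⟨{e, f}, ⟨insert_subset he (singleton_subset_iff.2 hf), e, f, hef, rfl⟩, sum_pair hef⟩

lemma polar_Q_add_right (a x y : V) : polar Q a (x + y) = polar Q a x + polar Q a y := by
  simp only [polar, Q, Pi.add_apply]; ring

lemma Q_zero : Q 0 = 0 := by simp [Q]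

lemma polar_Q_self (a : V) : polar Q a a = 0 := by
  rw [polar, ZModModule.add_self, sub_sub, ZModModule.add_self, Q_zero, sub_zero]

lemma card_filter_Q_eq_one : (univ.filter fun v : V => Q v = 1).card = 28 := by decide

namespace IsConwellHeptad

variable {H : Finset V}

lemma polar_eq_one (hH : IsConwellHeptad H) {a b : V} (ha : a ∈ H) (hb : b ∈ H)
    (hab : a ≠ b) : polar Q a b = 1 :=
  polar_eq_one_of_apply_eq_one (hH.2.1 a ha).2 (hH.2.1 b hb).2 (hH.2.2 a ha b hb hab)

lemma polar_add_eq_one_iff (hH : IsConwellHeptad H) {a e f : V} (ha : a ∈ H) (he : e ∈ H)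
    (hf : f ∈ H) (hef : e ≠ f) :
    polar Q a (e + f) = 1 ↔ a = e ∨ a = f := by
  rw [polar_Q_add_right]
  by_cases hae : a = e
  · subst hae
    simp [polar_Q_self, hH.polar_eq_one ha hf hef]
  by_cases haf : a = f
  · subst haf
    simp [polar_Q_self, hH.polar_eq_one ha he hae]
  simp only [hH.polar_eq_one ha he hae, hH.polar_eq_one ha hf haf, hae, haf, or_self,
    iff_false]
  decide

lemma add_notMem_s11 (hH : IsConwellHeptad H) {e f : V} (he : e ∈ H) (hf : f ∈ H) (hef : e ≠ f) :
    e + f ∉ H := by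
  intro hsum
  obtain ⟨d, hd, hd'⟩ : ∃ d ∈ H, d ∉ ({e, f, e + f} : Finset V) :=
    exists_mem_notMem_of_card_lt_card (card_le_three.trans_lt (by rw [hH.1]; norm_num))
  simp only [mem_insert, mem_singleton, not_or] at hd'
  have := (hH.polar_add_eq_one_iff hd he hf hef).1 (hH.polar_eq_one hd hsum hd'.2.2)
  tauto

lemma filter_polar_sum_eq (hH : IsConwellHeptad H) {s : Finset V} (hs : s ∈ H.powersetCard 2) :
    H.filter (fun a => polar Q a (∑ x ∈ s, x) = 1) = s := by
  obtain ⟨hsH, hs2⟩ := mem_powersetCard.1 hs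
  obtain ⟨e, f, hef, rfl⟩ := card_eq_two.1 hs2
  have he : e ∈ H := hsH (by simp)
  have hf : f ∈ H := hsH (by simp)
  ext a
  rw [mem_filter, sum_pair hef, mem_insert, mem_singleton]
  constructor
  · exact fun ⟨ha, h⟩ => (hH.polar_add_eq_one_iff ha he hf hef).1 h
  · rintro (rfl | rfl) <;> exact ⟨‹_›, (hH.polar_add_eq_one_iff ‹_› he hf hef).2 (by simp)⟩

lemma card_pairSums (hH : IsConwellHeptad H) : (pairSums H).card = 21 := by
  have hinj : Set.InjOn (fun s : Finset V => ∑ x ∈ s, x) (H.powersetCard 2) :=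
    fun s hs t ht hst => by
      rw [← hH.filter_polar_sum_eq hs, ← hH.filter_polar_sum_eq ht]
      simp only at hst
      rw [hst]
  rw [pairSums, card_image_of_injOn hinj, card_powersetCard, hH.1]
  rfl

lemma union_pairSums_eq (hH : IsConwellHeptad H) :
    H ∪ pairSums H = univ.filter fun v => Q v = 1 := by
  refine eq_of_subset_of_card_le ?_ ?_
  · intro v hv
    rw [mem_filter]
    rcases mem_union.1 hv with hv | hv
    · exact ⟨mem_univ v, (hH.2.1 v hv).2⟩
    · obtain ⟨e, he, f, hf, hef, rfl⟩ := mem_pairSums.1 hv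
      exact ⟨mem_univ _, hH.2.2 e he f hf hef⟩
  · have hdisj : Disjoint H (pairSums H) := disjoint_right.2 fun v hv => by
      obtain ⟨e, he, f, hf, hef, rfl⟩ := mem_pairSums.1 hv
      exact hH.add_notMem_s11 he hf hef
    rw [card_filter_Q_eq_one, card_union_of_disjoint hdisj, hH.1, hH.card_pairSums]

lemma mem_iff_notMem_of_add_add_eq_zero (hH : IsConwellHeptad H) {a b c : V} (ha : a ∈ H)
    (hb : Q b = 1) (hc : Q c = 1) (habc : a + b + c = 0) : b ∈ H ↔ c ∉ H := by
  rw [eq_neg_of_add_eq_zero_right habc, ZModModule.neg_eq_self] at hc ⊢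
  constructor
  · intro hbH
    have hab : a ≠ b := by
      rintro rfl
      rw [ZModModule.add_self, Q_zero] at hc
      exact zero_ne_one hc
    exact hH.add_notMem_s11 ha hbH hab
  · intro hcH
    by_contra hbH
    have hb' : b ∈ pairSums H := by
      have := hH.union_pairSums_eq ▸ mem_filter.2 ⟨mem_univ b, hb⟩
      exact (mem_union.1 this).resolve_left hbH
    obtain ⟨e, he, f, hf, hef, rfl⟩ := mem_pairSums.1 hb'
    have hpolar := polar_eq_one_of_apply_eq_one (hH.2.1 a ha).2 hb hc
    rcases (hH.polar_add_eq_one_iff ha he hf hef).1 hpolar with rfl | rfl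
    · exact hcH (by rwa [← add_assoc, ZModModule.add_self, zero_add])
    · exact hcH (by rwa [add_left_comm, ZModModule.add_self, add_zero])

end IsConwellHeptad

/-- Every external line meets a Conwell heptad in either 0 or exactly 2 points. -/
theorem external_line_meets_heptad_in_zero_or_two (H L : Finset (Fin 6 → ZMod 2))
    (hH : IsConwellHeptad H) (hL3 : L.card = 3)
    (hLpts : ∀ v ∈ L, v ≠ 0 ∧ Q v = 1) (hLsum : (∑ v ∈ L, v) = 0) :
    (L ∩ H).card = 0 ∨ (L ∩ H).card = 2 := by
  obtain ⟨a, b, c, hab, hac, hbc, rfl⟩ := card_eq_three.1 hL3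
  have habc : a + b + c = 0 := by
    rwa [sum_insert (by simp [hab, hac]), sum_pair hbc, ← add_assoc] at hLsum
  have hQa := (hLpts a (by simp)).2
  have hQb := (hLpts b (by simp)).2
  have hQc := (hLpts c (by simp)).2
  have hA := fun ha : a ∈ H => hH.mem_iff_notMem_of_add_add_eq_zero ha hQb hQc habc
  have hB := fun hb : b ∈ H => hH.mem_iff_notMem_of_add_add_eq_zero hb hQc hQa
    (by rw [← habc]; abel)
  have hC := fun hc : c ∈ H => hH.mem_iff_notMem_of_add_add_eq_zero hc hQa hQb
    (by rw [← habc]; abel)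
  by_cases ha : a ∈ H <;> by_cases hb : b ∈ H <;> by_cases hc : c ∈ H <;>
    simp_all [insert_inter_of_mem, insert_inter_of_notMem]
end

section
/- Removing a Conwell heptad from the off-quadric configuration yields a configuration isomorphic to G₂(7): for any Conwell heptad H, there exists a bijection g from the set of off-quadric points not in H (a set of 21 points) to the 2-element subsets of Fin 7 such that for all pairwise distinct off-quadric points a, b, c not in H, one has a + b + c = 0 if and only if (g(a) ∪ g(b) ∪ g(c)).card = 3. -/
/-!
Enumerate the heptad as `h₀, …, h₆`. Since `Q hᵢ = Q hⱼ = Q (hᵢ + hⱼ) = 1`, the polar form of `Q`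
is `1` on every pair of distinct `hᵢ`. Pairing a relation `∑ i ∈ S, hᵢ = 0` with `hₖ` for some
`k ∉ S` and for some `k ∈ S` shows that `#S` and `#S - 1` are both even, so no proper nonempty
subset of the heptad sums to zero. Hence `S ↦ ∑ i ∈ S, hᵢ` is injective on subsets with
`#S + #T < 7`: it maps the 21 pairs `{i, j}` injectively, hence bijectively, onto the 21
off-quadric points outside `H`, and it turns `a + b + c = 0` into `s ∆ t = u`, i.e. into the
three pairs lying in a common triple.
-/

open Finset QuadraticMap
open scoped symmDiff

section ZModTwoModule

variable {M : Type*} [AddCommGroup M] [Module (ZMod 2) M]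

theorem ZModModule.add_self_eq_zero_of_two (x : M) : x + x = 0 := by
  rw [← two_nsmul, ZModModule.char_nsmul_eq_zero]

theorem ZModModule.add_eq_zero_iff_eq_of_two {x y : M} : x + y = 0 ↔ x = y := by
  rw [add_eq_zero_iff_eq_neg, neg_eq_iff_add_eq_zero.mpr (add_self_eq_zero_of_two y)]

theorem Finset.symmDiff_eq_union_sdiff_inter {α : Type*} [DecidableEq α] (s t : Finset α) :
    s ∆ t = (s ∪ t) \ (s ∩ t) :=
  symmDiff_eq_sup_sdiff_inf s t

theorem Finset.sum_symmDiff_of_two {α : Type*} [DecidableEq α] (s t : Finset α) (f : α → M) :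
    ∑ i ∈ s ∆ t, f i = ∑ i ∈ s, f i + ∑ i ∈ t, f i := by
  rw [← sum_union_inter, ← sum_sdiff (inter_subset_union (s := s) (t := t)),
    ← symmDiff_eq_union_sdiff_inter, add_assoc, ZModModule.add_self_eq_zero_of_two, add_zero]

end ZModTwoModule

section PairsOfThree

variable {α : Type*} [DecidableEq α] {s t u : Finset α}

theorem Finset.card_symmDiff_add_card_inter_add_card_inter (s t : Finset α) :
    #(s ∆ t) + #(s ∩ t) + #(s ∩ t) = #s + #t := by
  rw [symmDiff_eq_union_sdiff_inter, card_sdiff_add_card_eq_card inter_subset_union,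
    card_union_add_card_inter]

theorem Finset.card_symmDiff_le_add (s t : Finset α) : #(s ∆ t) ≤ #s + #t := by
  have := card_symmDiff_add_card_inter_add_card_inter s t
  omega

theorem Finset.three_le_card_union_of_card_eq_two (hs : #s = 2) (ht : #t = 2) (hst : s ≠ t) :
    3 ≤ #(s ∪ t) := by
  have hsub : s ⊂ s ∪ t := ssubset_of_subset_of_ne subset_union_left fun h =>
    hst (eq_of_subset_of_card_le (h ▸ subset_union_right) (by omega)).symm
  have := card_lt_card hsub
  omega

theorem Finset.symmDiff_eq_iff_card_union_eq_three (hs : #s = 2) (ht : #t = 2) (hu : #u = 2)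
    (hst : s ≠ t) (hsu : s ≠ u) (htu : t ≠ u) : s ∆ t = u ↔ #(s ∪ t ∪ u) = 3 := by
  have hcard := card_symmDiff_add_card_inter_add_card_inter s t
  have hunion := card_union_add_card_inter s t
  have h3 := three_le_card_union_of_card_eq_two hs ht hst
  constructor
  · rintro rfl
    rw [union_eq_left.mpr symmDiff_subset_union]
    omega
  · intro hW
    have hst3 : #(s ∪ t) = 3 := le_antisymm (hW ▸ card_le_card subset_union_left) h3
    have hW' : s ∪ t ∪ u = s ∪ t := (eq_of_subset_of_card_le subset_union_left (by omega)).symm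
    have hsd : #(s ∆ t) = 2 := by omega
    have hsds : s ≠ s ∆ t := fun h => by
      rw [eq_comm, symmDiff_eq_left, bot_eq_empty] at h
      simp [h] at ht
    have hsdt : t ≠ s ∆ t := fun h => by
      rw [eq_comm, symmDiff_eq_right, bot_eq_empty] at h
      simp [h] at hs
    have hpairs : powersetCard 2 (s ∪ t) = {s, t, s ∆ t} := by
      refine (eq_of_subset_of_card_le ?_ ?_).symm
      · simp only [insert_subset_iff, singleton_subset_iff, mem_powersetCard]
        exact ⟨⟨subset_union_left, hs⟩, ⟨subset_union_right, ht⟩, ⟨symmDiff_subset_union, hsd⟩⟩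
      · rw [card_powersetCard, hst3, card_eq_three.mpr ⟨s, t, s ∆ t, hst, hsds, hsdt, rfl⟩]
        rfl
    have : u ∈ powersetCard 2 (s ∪ t) := mem_powersetCard.mpr ⟨hW' ▸ subset_union_right, hu⟩
    rw [hpairs, mem_insert, mem_insert, mem_singleton] at this
    rcases this with rfl | rfl | rfl
    exacts [absurd rfl hsu, absurd rfl htu, rfl]

end PairsOfThree

section AlternatingForm

variable {M : Type*} [AddCommGroup M] [Module (ZMod 2) M] {B : LinearMap.BilinForm (ZMod 2) M}
  {ι : Type*} [DecidableEq ι] {v : ι → M}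

theorem LinearMap.BilinForm.apply_sum_eq_card_erase (hB : B.IsAlt)
    (hv : ∀ i j, i ≠ j → B (v i) (v j) = 1) (S : Finset ι) (k : ι) :
    B (∑ i ∈ S, v i) (v k) = #(S.erase k) := by
  rw [map_sum, LinearMap.sum_apply, ← sum_erase S (hB (v k)), card_eq_sum_ones, Nat.cast_sum,
    Nat.cast_one]
  exact sum_congr rfl fun i hi => hv i k (ne_of_mem_erase hi)

theorem LinearMap.BilinForm.sum_ne_zero_of_apply_eq_one [Fintype ι] (hB : B.IsAlt)
    (hv : ∀ i j, i ≠ j → B (v i) (v j) = 1) {S : Finset ι} (hne : S.Nonempty) (huniv : S ≠ univ) :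
    ∑ i ∈ S, v i ≠ 0 := by
  intro hzero
  obtain ⟨k, hk⟩ := hne
  obtain ⟨l, hl⟩ := not_forall.mp (mt eq_univ_iff_forall.mpr huniv)
  have hin := B.apply_sum_eq_card_erase hB hv S k
  have hout := B.apply_sum_eq_card_erase hB hv S l
  rw [hzero, map_zero, LinearMap.zero_apply] at hin hout
  rw [erase_eq_of_notMem hl, ← card_erase_add_one hk, Nat.cast_succ, ← hin, zero_add] at hout
  exact one_ne_zero hout.symm

theorem LinearMap.BilinForm.sum_eq_sum_iff_of_apply_eq_one [Fintype ι] (hB : B.IsAlt)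
    (hv : ∀ i j, i ≠ j → B (v i) (v j) = 1) {S T : Finset ι} (hcard : #S + #T < Fintype.card ι) :
    ∑ i ∈ S, v i = ∑ i ∈ T, v i ↔ S = T := by
  refine ⟨fun hsum => ?_, fun h => h ▸ rfl⟩
  by_contra hST
  refine B.sum_ne_zero_of_apply_eq_one hB hv (symmDiff_nonempty.mpr hST) (fun huniv => ?_) ?_
  · have := card_symmDiff_le_add S T
    rw [huniv, card_univ] at this
    omega
  · rw [sum_symmDiff_of_two, ZModModule.add_eq_zero_iff_eq_of_two]
    exact hsum

end AlternatingForm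

section QuadraticFormZModTwo

variable {M : Type*} [AddCommGroup M] [Module (ZMod 2) M] (q : QuadraticForm (ZMod 2) M)

theorem QuadraticMap.polarBilin_isAlt_of_two : (polarBilin q).IsAlt := fun x => by
  rw [polarBilin_apply_apply, polar_self, CharTwo.two_nsmul]

theorem QuadraticMap.polar_eq_one_of_two {x y : M} (hx : q x = 1) (hy : q y = 1)
    (hxy : q (x + y) = 1) : polar q x y = 1 := by
  rw [polar, hx, hy, hxy]
  decide

end QuadraticFormZModTwo

def hyperbolicForm : QuadraticForm (ZMod 2) (Fin 6 → ZMod 2) :=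
  linMulLin (.proj 0) (.proj 1) + linMulLin (.proj 2) (.proj 3) + linMulLin (.proj 4) (.proj 5)

theorem coe_hyperbolicForm : ⇑hyperbolicForm = Q := by
  ext v
  simp [hyperbolicForm, Q, linMulLin_apply]

def offQuadric : Finset (Fin 6 → ZMod 2) := {v | v ≠ 0 ∧ Q v = 1}

theorem card_offQuadric : #offQuadric = 28 := by
  decide

abbrev OffQuadricOutside (H : Finset (Fin 6 → ZMod 2)) : Type :=
  {v : Fin 6 → ZMod 2 // (v ≠ 0 ∧ Q v = 1) ∧ v ∉ H}

namespace IsConwellHeptad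

theorem card_offQuadricOutside {H : Finset (Fin 6 → ZMod 2)} (hH : IsConwellHeptad H) :
    Fintype.card (OffQuadricOutside H) = 21 := by
  have hsub : H ⊆ offQuadric := fun v hv => by simpa [offQuadric] using hH.2.1 v hv
  have hfilter : univ.filter (fun v => (v ≠ 0 ∧ Q v = 1) ∧ v ∉ H) = offQuadric \ H := by
    ext v
    simp [offQuadric]
  rw [Fintype.card_subtype, hfilter, card_sdiff_of_subset hsub, card_offQuadric, hH.1]

variable {H : Finset (Fin 6 → ZMod 2)} (hH : IsConwellHeptad H)

noncomputable def point (i : Fin 7) : Fin 6 → ZMod 2 :=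
  (H.equivFinOfCardEq hH.1).symm i

theorem point_mem (i : Fin 7) : hH.point i ∈ H :=
  ((H.equivFinOfCardEq hH.1).symm i).2

theorem exists_point_eq {v : Fin 6 → ZMod 2} (hv : v ∈ H) : ∃ i, hH.point i = v :=
  ⟨H.equivFinOfCardEq hH.1 ⟨v, hv⟩, by simp [point]⟩

theorem point_injective : Function.Injective hH.point := fun _ _ hij =>
  (H.equivFinOfCardEq hH.1).symm.injective (Subtype.ext hij)

theorem Q_point_add_point {i j : Fin 7} (hij : i ≠ j) : Q (hH.point i + hH.point j) = 1 :=
  hH.2.2 _ (hH.point_mem i) _ (hH.point_mem j) (hH.point_injective.ne hij)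

theorem polarBilin_point_point {i j : Fin 7} (hij : i ≠ j) :
    polarBilin hyperbolicForm (hH.point i) (hH.point j) = 1 := by
  rw [polarBilin_apply_apply]
  apply polar_eq_one_of_two <;> rw [coe_hyperbolicForm]
  exacts [(hH.2.1 _ (hH.point_mem i)).2, (hH.2.1 _ (hH.point_mem j)).2, hH.Q_point_add_point hij]

theorem sum_point_eq_sum_point_iff {S T : Finset (Fin 7)} (hcard : #S + #T < 7) :
    ∑ i ∈ S, hH.point i = ∑ i ∈ T, hH.point i ↔ S = T :=
  LinearMap.BilinForm.sum_eq_sum_iff_of_apply_eq_one (polarBilin_isAlt_of_two _)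
    (fun _ _ hij => hH.polarBilin_point_point hij) hcard

theorem sum_point_mem_offQuadricOutside {s : Finset (Fin 7)} (hs : #s = 2) :
    (∑ i ∈ s, hH.point i ≠ 0 ∧ Q (∑ i ∈ s, hH.point i) = 1) ∧ ∑ i ∈ s, hH.point i ∉ H := by
  refine ⟨⟨fun h0 => ?_, ?_⟩, fun hmem => ?_⟩
  · rw [← sum_empty, hH.sum_point_eq_sum_point_iff (by simp [hs])] at h0
    simp [h0] at hs
  · obtain ⟨i, j, hij, rfl⟩ := card_eq_two.mp hs
    rw [sum_pair hij]
    exact hH.Q_point_add_point hij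
  · obtain ⟨k, hk⟩ := hH.exists_point_eq hmem
    rw [← sum_singleton hH.point k, hH.sum_point_eq_sum_point_iff (by simp [hs])] at hk
    simp [← hk] at hs

noncomputable def pairPoint (s : {s : Finset (Fin 7) // #s = 2}) : OffQuadricOutside H :=
  ⟨∑ i ∈ s.1, hH.point i, hH.sum_point_mem_offQuadricOutside s.2⟩

theorem pairPoint_bijective : Function.Bijective hH.pairPoint := by
  refine (Fintype.bijective_iff_injective_and_card _).mpr ⟨fun s t hst => ?_, ?_⟩
  · refine Subtype.ext ((hH.sum_point_eq_sum_point_iff ?_).mp (congrArg Subtype.val hst))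
    rw [s.2, t.2]
    norm_num
  · rw [hH.card_offQuadricOutside, Fintype.card_finset_len, Fintype.card_fin]
    rfl

theorem pairPoint_add_add_eq_zero_iff {s t u : {s : Finset (Fin 7) // #s = 2}} (hst : s ≠ t)
    (hsu : s ≠ u) (htu : t ≠ u) :
    (hH.pairPoint s : Fin 6 → ZMod 2) + hH.pairPoint t + hH.pairPoint u = 0 ↔
      #(s.1 ∪ t.1 ∪ u.1) = 3 := by
  obtain ⟨s, hs⟩ := s
  obtain ⟨t, ht⟩ := t
  obtain ⟨u, hu⟩ := u
  have hcard : #(s ∆ t) + #u < 7 := by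
    have := card_symmDiff_le_add s t
    omega
  simp only [pairPoint]
  rw [ZModModule.add_eq_zero_iff_eq_of_two, ← sum_symmDiff_of_two,
    hH.sum_point_eq_sum_point_iff hcard]
  exact symmDiff_eq_iff_card_union_eq_three hs ht hu (by simpa using hst) (by simpa using hsu)
    (by simpa using htu)

end IsConwellHeptad

/-- Removing a Conwell heptad from the off-quadric configuration yields a configuration
isomorphic to the combinatorial Grassmannian G₂(7). -/
theorem remove_heptad_iso_G2_7 (H : Finset (Fin 6 → ZMod 2)) (hH : IsConwellHeptad H) :
    ∃ g : {v : Fin 6 → ZMod 2 // (v ≠ 0 ∧ Q v = 1) ∧ v ∉ H} ≃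
        {s : Finset (Fin 7) // s.card = 2},
      ∀ a b c : {v : Fin 6 → ZMod 2 // (v ≠ 0 ∧ Q v = 1) ∧ v ∉ H},
        a ≠ b → a ≠ c → b ≠ c →
        ((a : Fin 6 → ZMod 2) + (b : Fin 6 → ZMod 2) + (c : Fin 6 → ZMod 2) = 0 ↔
          ((g a : Finset (Fin 7)) ∪ (g b : Finset (Fin 7)) ∪ (g c : Finset (Fin 7))).card = 3) := by
  let e := Equiv.ofBijective _ hH.pairPoint_bijective
  refine ⟨e.symm, fun a b c hab hac hbc => ?_⟩
  obtain ⟨s, rfl⟩ := e.surjective a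
  obtain ⟨t, rfl⟩ := e.surjective b
  obtain ⟨u, rfl⟩ := e.surjective c
  simp only [Equiv.symm_apply_apply]
  exact hH.pairPoint_add_add_eq_zero_iff (ne_of_apply_ne e hab) (ne_of_apply_ne e hac)
    (ne_of_apply_ne e hbc)
end
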